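/- Backup protection: Suppose under σ_{-u*} Ranking matches u to v and u has a backup b. Then for any permutation σ obtained by inserting u* into σ_{-u*} at an arbitrary rank, u is matched in R(σ) to some vertex w with σ(w) ≤ σ(b). -/

import Mathlib

open List

variable {V : Type*}

/-- Whether vertex `u` is an endpoint of some edge in the partial matching `M`. -/
def isMatchedL [DecidableEq V] (M : List (V × V)) (u : V) : Bool :=
  M.any (fun p => p.1 = u || p.2 = u)

/-- One step of the Ranking algorithm: process vertex `u`.  If `u` is not forbidden and
not yet matched, it is matched to the first available neighbor in the order `order`. -/
def rankingStepF [DecidableEq V] (G : SimpleGraph V) [DecidableRel G.Adj]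
    (forbidden : List V) (order : List V) (M : List (V × V)) (u : V) : List (V × V) :=
  if u ∈ forbidden ∨ isMatchedL M u = true then M
  else
    match order.find? (fun w =>
        decide (G.Adj u w) && !(decide (w ∈ forbidden)) && !isMatchedL M w) with
    | some w => (u, w) :: M
    | none => M

/-- Partial matching of Ranking after processing the first `t` vertices of `order`. -/
def rankingPartialF [DecidableEq V] (G : SimpleGraph V) [DecidableRel G.Adj]
    (forbidden order : List V) (t : ℕ) : List (V × V) :=
  (order.take t).foldl (rankingStepF G forbidden order) []

/-- The matching output by Ranking on the permutation given by the list `order`. -/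
def rankingList [DecidableEq V] (G : SimpleGraph V) [DecidableRel G.Adj]
    (order : List V) : List (V × V) :=
  order.foldl (rankingStepF G [] order) []

/-- `u` is matched to `v` in the output of Ranking on `order`. -/
def matchedTo [DecidableEq V] (G : SimpleGraph V) [DecidableRel G.Adj]
    (order : List V) (u v : V) : Prop :=
  (u, v) ∈ rankingList G order ∨ (v, u) ∈ rankingList G order

/-- `u` is matched in the output of Ranking on `order`. -/
def isMatchedInRanking [DecidableEq V] (G : SimpleGraph V) [DecidableRel G.Adj]
    (order : List V) (u : V) : Prop :=
  ∃ v, matchedTo G order u v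

/-- The set of (unordered) edges of a list of matched pairs. -/
def matchEdges (L : List (V × V)) : Set (Sym2 V) := {e | ∃ p ∈ L, e = s(p.1, p.2)}

/-!
Ranking on `σ` is replayed as `run`: vertices are processed in order while a set of unavailable
vertices is carried along, and each vertex picks its first available neighbour after it. Then
`R(σ₋ᵤ*)` is the run on `σ` with `u*` unavailable, the backup run has `u*` and `v` unavailable,
and `R(σ)` has nothing unavailable.

The statement is proved in a general form: if the runs from `T` and from `T ∪ {v}` match `u` to
`v` and to `b`, then the run from any `T'` that differs from `T` in a single vertex `y ≠ u`
matches `u` to a vertex ranked no later than `b`. The point is that two runs whose unavailable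
sets differ in one vertex still differ in at most one vertex after each step: the old one, or
the vertex that one of them picks. So, following the order, either the exceptional vertex
becomes `u`, picked by a vertex ranked before `b`; or the runs reach `u`, which still finds `v`
or `b` available; or they reach `v`, whose pick lets the run from `T'` rejoin the backup run.
-/

namespace List

variable {α β : Type*}

theorem find?_eq_some_of_imp {p q : α → Bool} {l : List α} {c : α}
    (hpq : ∀ x ∈ l, p x → q x) (hq : l.find? q = some c) (hc : p c) :
    l.find? p = some c := by
  obtain ⟨-, as, bs, rfl, has⟩ := find?_eq_some_iff_append.1 hq
  refine find?_eq_some_iff_append.2 ⟨hc, as, bs, rfl, fun x hx => ?_⟩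
  have hqx : q x = false := by simpa using has x hx
  cases hpx : p x
  · rfl
  · simp [hpq x (mem_append_left _ hx) hpx] at hqx

theorem find?_eq_none_of_imp {p q : α → Bool} {l : List α}
    (hpq : ∀ x ∈ l, p x → q x) (hq : l.find? q = none) : l.find? p = none := by
  rw [find?_eq_none] at hq ⊢
  exact fun x hx hpx => hq x hx (hpq x hx hpx)

theorem find?_eq_or_eq_some_of_imp {p q : α → Bool} {l : List α} {y : α}
    (hpq : ∀ x ∈ l, p x → q x) (hqp : ∀ x ∈ l, x ≠ y → q x → p x) :
    l.find? p = l.find? q ∨ l.find? q = some y := by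
  cases hq : l.find? q with
  | none => exact Or.inl (find?_eq_none_of_imp hpq hq)
  | some c =>
    by_cases hcy : c = y
    · exact Or.inr (hcy ▸ rfl)
    · exact Or.inl (find?_eq_some_of_imp hpq hq
        (hqp c (mem_of_find?_eq_some hq) hcy (find?_some hq)))

theorem find?_eq_or_of_agree_off {p q : α → Bool} {l : List α} {y : α}
    (h : ∀ x ∈ l, x ≠ y → p x = q x) :
    l.find? p = l.find? q ∨ (l.find? p = some y ∧ q y = false) ∨
      (l.find? q = some y ∧ p y = false) := by
  by_cases hpq : p y = q y
  · exact Or.inl (find?_congr fun x _ => by by_cases hxy : x = y <;> simp_all)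
  · cases hq : q y
    · rcases find?_eq_or_eq_some_of_imp (l := l) (p := q) (q := p) (y := y)
        (fun x hx hqx => by by_cases hxy : x = y <;> simp_all)
        (fun x hx hxy hpx => by rwa [h x hx hxy] at hpx) with h' | h'
      · exact Or.inl h'.symm
      · exact Or.inr (Or.inl ⟨h', rfl⟩)
    · rcases find?_eq_or_eq_some_of_imp (l := l) (p := p) (q := q) (y := y)
        (fun x hx hpx => by by_cases hxy : x = y <;> simp_all)
        (fun x hx hxy hqx => by rwa [h x hx hxy]) with h' | h'
      · exact Or.inl h'
      · exact Or.inr (Or.inr ⟨h', by simpa [hq] using hpq⟩)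

theorem notMem_of_pairwise_cons [Preorder β] {σ : α → β} {a : α} {l : List α}
    (hl : (a :: l).Pairwise (σ · < σ ·)) : a ∉ l :=
  fun ha => lt_irrefl _ ((pairwise_cons.1 hl).1 a ha)

theorem find?_lt_of_pairwise [Preorder β] {σ : α → β} {p : α → Bool} {l : List α} {c y : α}
    (hl : l.Pairwise (σ · < σ ·)) (h : l.find? p = some c) (hy : y ∈ l) (hpy : p y)
    (hyc : y ≠ c) : σ c < σ y := by
  obtain ⟨-, as, bs, rfl, has⟩ := find?_eq_some_iff_append.1 h
  have hyas : y ∉ as := fun hy' => by simpa [hpy] using has y hy'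
  have hybs : y ∈ bs := by simpa [hyas, hyc] using hy
  exact (pairwise_cons.1 (pairwise_append.1 hl).2.1).1 y hybs

theorem find?_le_of_pairwise [Preorder β] {σ : α → β} {p : α → Bool} {l : List α} {c y : α}
    (hl : l.Pairwise (σ · < σ ·)) (h : l.find? p = some c) (hy : y ∈ l) (hpy : p y) :
    σ c ≤ σ y := by
  by_cases hyc : y = c
  · exact hyc ▸ le_rfl
  · exact (find?_lt_of_pairwise hl h hy hpy hyc).le

theorem exists_find?_eq_some_le [Preorder β] {σ : α → β} {p : α → Bool} {l : List α} {y : α}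
    (hl : l.Pairwise (σ · < σ ·)) (hy : y ∈ l) (hpy : p y) :
    ∃ c, l.find? p = some c ∧ σ c ≤ σ y := by
  obtain ⟨c, hc⟩ := Option.isSome_iff_exists.1 (find?_isSome.2 ⟨y, hy, hpy⟩)
  exact ⟨c, hc, find?_le_of_pairwise hl hc hy hpy⟩

theorem Nodup.pairwise_idxOf_lt [DecidableEq α] {l : List α} (hl : l.Nodup) :
    l.Pairwise (l.idxOf · < l.idxOf ·) :=
  pairwise_iff_getElem.2 fun i j hi hj hij => by
    rwa [hl.idxOf_getElem, hl.idxOf_getElem]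

theorem erase_insertIdx_of_notMem [DecidableEq α] {l : List α} {x : α} (hx : x ∉ l) (i : ℕ) :
    (l.insertIdx i x).erase x = l := by
  induction l generalizing i with
  | nil => cases i <;> simp
  | cons a l ih =>
    cases i with
    | zero => simp
    | succ i =>
      have hax : a ≠ x := fun h => hx (h ▸ mem_cons_self)
      rw [insertIdx_succ_cons, erase_cons_tail (by simpa using hax),
        ih (fun h => hx (mem_cons_of_mem a h))]

theorem Nodup.insertIdx_of_notMem {l : List α} {x : α} (hl : l.Nodup) (hx : x ∉ l) (i : ℕ) :
    (l.insertIdx i x).Nodup := by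
  rcases le_or_gt i l.length with h | h
  · exact (perm_insertIdx x l h).nodup_iff.2 (nodup_cons.2 ⟨hx, hl⟩)
  · rwa [insertIdx_of_length_lt h]

end List

namespace Ranking

def Paired (M : List (V × V)) (u w : V) : Prop := (u, w) ∈ M ∨ (w, u) ∈ M

theorem Paired.symm {M : List (V × V)} {u w : V} (h : Paired M u w) : Paired M w u :=
  Or.symm h

variable [DecidableEq V]

section Run

variable (G : SimpleGraph V) [DecidableRel G.Adj]

def avail (S : Finset V) (a w : V) : Bool := G.Adj a w && w ∉ S

def pick (S : Finset V) (a : V) (L : List V) : Option V :=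
  if a ∈ S then none else L.find? (avail G S a)

def nextForbidden (S : Finset V) (a : V) (L : List V) : Finset V :=
  (pick G S a L).elim S (insert · S)

/-- Ranking on the remaining vertices `L`, with the vertices of `S` unavailable. A vertex only
looks at the vertices after it: an earlier vertex that is still unmatched had no unmatched
neighbour when it was processed, so it is not adjacent to the current one. -/
def run : Finset V → List V → List (V × V)
  | _, [] => []
  | S, a :: L => ((pick G S a L).map (a, ·)).toList ++ run (nextForbidden G S a L) L

end Run

variable {G : SimpleGraph V} [DecidableRel G.Adj]

theorem avail_eq_true {S : Finset V} {a w : V} : avail G S a w ↔ G.Adj a w ∧ w ∉ S := by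
  simp [avail]

theorem pick_eq_some {S : Finset V} {a c : V} {L : List V} :
    pick G S a L = some c ↔ a ∉ S ∧ L.find? (avail G S a) = some c := by
  by_cases ha : a ∈ S <;> simp [pick, ha]

theorem pick_spec {S : Finset V} {a c : V} {L : List V} (h : pick G S a L = some c) :
    G.Adj a c ∧ a ∉ S ∧ c ∉ S ∧ c ∈ L := by
  obtain ⟨ha, hf⟩ := pick_eq_some.1 h
  obtain ⟨hadj, hc⟩ := avail_eq_true.1 (find?_some hf)
  exact ⟨hadj, ha, hc, mem_of_find?_eq_some hf⟩

theorem pick_of_mem {S : Finset V} {a : V} {L : List V} (ha : a ∈ S) : pick G S a L = none :=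
  if_pos ha

theorem mem_nextForbidden {S : Finset V} {a x : V} {L : List V} :
    x ∈ nextForbidden G S a L ↔ x ∈ S ∨ pick G S a L = some x := by
  unfold nextForbidden
  cases pick G S a L <;> simp [eq_comm, or_comm]

theorem run_cons_of_mem {S : Finset V} {a : V} {L : List V} (ha : a ∈ S) :
    run G S (a :: L) = run G S L := by
  simp [run, nextForbidden, pick_of_mem ha]

theorem paired_run_cons {S : Finset V} {a u w : V} {L : List V} :
    Paired (run G S (a :: L)) u w ↔ (pick G S a L = some w ∧ a = u) ∨
      (pick G S a L = some u ∧ a = w) ∨ Paired (run G (nextForbidden G S a L) L) u w := by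
  simp only [Paired, run]
  cases pick G S a L <;> simp [eq_comm]; tauto

theorem mem_run_spec {S : Finset V} {L : List V} {p : V × V} (h : p ∈ run G S L) :
    G.Adj p.1 p.2 ∧ p.1 ∉ S ∧ p.2 ∉ S ∧ p.1 ∈ L ∧ p.2 ∈ L := by
  induction L generalizing S with
  | nil => simp [run] at h
  | cons a L ih =>
    simp only [run, mem_append, Option.mem_toList, Option.map_eq_some_iff] at h
    rcases h with ⟨c, hc, rfl⟩ | h
    · obtain ⟨hadj, ha, hcS, hcL⟩ := pick_spec hc
      exact ⟨hadj, ha, hcS, mem_cons_self, mem_cons_of_mem a hcL⟩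
    · obtain ⟨hadj, h₁, h₂, h₁L, h₂L⟩ := ih h
      exact ⟨hadj, fun h => h₁ (mem_nextForbidden.2 (Or.inl h)),
        fun h => h₂ (mem_nextForbidden.2 (Or.inl h)), mem_cons_of_mem a h₁L,
        mem_cons_of_mem a h₂L⟩

theorem Paired.run_spec {S : Finset V} {L : List V} {u w : V} (h : Paired (run G S L) u w) :
    G.Adj u w ∧ u ∉ S ∧ u ∈ L := by
  rcases h with h | h
  · obtain ⟨hadj, hu, -, huL, -⟩ := mem_run_spec h
    exact ⟨hadj, hu, huL⟩
  · obtain ⟨hadj, -, hu, -, huL⟩ := mem_run_spec h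
    exact ⟨hadj.symm, hu, huL⟩

theorem paired_run_cons_self {S : Finset V} {a w : V} {L : List V} (ha : a ∉ L) :
    Paired (run G S (a :: L)) a w ↔ pick G S a L = some w := by
  rw [paired_run_cons]
  refine ⟨?_, fun h => Or.inl ⟨h, rfl⟩⟩
  rintro (⟨h, -⟩ | ⟨h, -⟩ | h)
  · exact h
  · exact absurd (pick_spec h).2.2.2 ha
  · exact absurd h.run_spec.2.2 ha

theorem pick_congr {S S' : Finset V} {a : V} {L : List V}
    (h : ∀ x ∈ a :: L, x ∈ S ↔ x ∈ S') : pick G S a L = pick G S' a L := by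
  have hf : L.find? (avail G S a) = L.find? (avail G S' a) :=
    find?_congr fun x hx => by simp [avail, h x (mem_cons_of_mem a hx)]
  simp only [pick, h a mem_cons_self, hf]

theorem run_congr {S S' : Finset V} {L : List V} (h : ∀ x ∈ L, x ∈ S ↔ x ∈ S') :
    run G S L = run G S' L := by
  induction L generalizing S S' with
  | nil => rfl
  | cons a L ih =>
    have hp : pick G S a L = pick G S' a L := pick_congr h
    simp only [run, hp]
    congr 1
    exact ih fun x hx => by
      simp only [mem_nextForbidden, hp, h x (mem_cons_of_mem a hx)]

theorem run_append_cons_of_mem {S : Finset V} {x : V} (hx : x ∈ S) (l₁ l₂ : List V) :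
    run G S (l₁ ++ x :: l₂) = run G S (l₁ ++ l₂) := by
  induction l₁ generalizing S with
  | nil => exact run_cons_of_mem hx
  | cons a l₁ ih =>
    have hp : pick G S a (l₁ ++ x :: l₂) = pick G S a (l₁ ++ l₂) := by
      simp [pick, avail, hx]
    have hn : nextForbidden G S a (l₁ ++ x :: l₂) = nextForbidden G S a (l₁ ++ l₂) := by
      simp only [nextForbidden, hp]
    simp only [cons_append, run, hp, hn]
    rw [ih (mem_nextForbidden.2 (Or.inl hx))]

theorem run_insert_eq_run_erase {S : Finset V} {x : V} {L : List V} (hL : L.Nodup) :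
    run G (insert x S) L = run G S (L.erase x) := by
  by_cases hx : x ∈ L
  · obtain ⟨l₁, l₂, rfl⟩ := append_of_mem hx
    have hx' : x ∉ l₁ ++ l₂ := (nodup_cons.1 (nodup_middle.1 hL)).1
    rw [run_append_cons_of_mem (Finset.mem_insert_self x S),
      erase_append_right _ (fun h => hx' (mem_append_left _ h)), erase_cons_head,
      run_congr (S' := S) fun y hy => by
        simp [Finset.mem_insert, show y ≠ x by rintro rfl; exact hx' hy]]
  · rw [erase_of_not_mem hx]
    exact run_congr fun y hy => by
      simp [Finset.mem_insert, show y ≠ x by rintro rfl; exact hx hy]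

theorem pick_insert_of_notMem {S : Finset V} {a v : V} {L : List V} (hav : a ≠ v)
    (hv : v ∉ nextForbidden G S a L) : pick G (insert v S) a L = pick G S a L := by
  by_cases ha : a ∈ S
  · rw [pick_of_mem ha, pick_of_mem (Finset.mem_insert_of_mem ha)]
  have hmono : ∀ x ∈ L, avail G (insert v S) a x → avail G S a x := by
    simp +contextual [avail]
  have ha' : a ∉ insert v S := by simp [ha, hav]
  simp only [pick, ha, ha', if_false]
  cases hf : L.find? (avail G S a) with
  | none => exact find?_eq_none_of_imp hmono hf
  | some c =>
    have hcv : c ≠ v := by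
      rintro rfl
      exact hv (mem_nextForbidden.2 (Or.inr (by simp [pick, ha, hf])))
    refine find?_eq_some_of_imp hmono hf ?_
    simpa [avail, hcv] using find?_some hf

/-- The run with `v` unavailable makes the same pick at `a`, because the run from `S` does not
pick `v` there. -/
theorem paired_run_nextForbidden {S : Finset V} {a u v b : V} {L : List V}
    (hau : a ≠ u) (hav : a ≠ v) (h₁ : Paired (run G S (a :: L)) u v)
    (h₂ : Paired (run G (insert v S) (a :: L)) u b) :
    Paired (run G (nextForbidden G S a L) L) u v ∧
      Paired (run G (insert v (nextForbidden G S a L)) L) u b := by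
  have h₁' : Paired (run G (nextForbidden G S a L) L) u v := by
    rcases paired_run_cons.1 h₁ with ⟨-, h⟩ | ⟨-, h⟩ | h
    exacts [absurd h hau, absurd h hav, h]
  have hu := h₁'.run_spec.2.1
  have hp := pick_insert_of_notMem hav h₁'.symm.run_spec.2.1
  have hnext : nextForbidden G (insert v S) a L = insert v (nextForbidden G S a L) := by
    ext x; simp only [mem_nextForbidden, hp, Finset.mem_insert]; tauto
  refine ⟨h₁', ?_⟩
  rcases paired_run_cons.1 h₂ with ⟨-, h⟩ | ⟨h, -⟩ | h
  · exact absurd h hau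
  · exact absurd (mem_nextForbidden.2 (Or.inr (hp ▸ h))) hu
  · rwa [hnext] at h


theorem exists_agree_nextForbidden_of_notMem {S S' : Finset V} {a y : V} {L : List V}
    (haS : a ∉ S) (haS' : a ∉ S') (h : ∀ x ∈ L, x ≠ y → (x ∈ S ↔ x ∈ S')) :
    ∃ y', (∀ x ∈ L, x ≠ y' → (x ∈ nextForbidden G S a L ↔ x ∈ nextForbidden G S' a L)) ∧
      (y' = y ∨ pick G S a L = some y' ∨ pick G S' a L = some y') := by
  simp only [mem_nextForbidden, pick, haS, haS', if_false]
  rcases find?_eq_or_of_agree_off (l := L) (p := avail G S a) (q := avail G S' a) (y := y)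
    (fun x hx hxy => by simp [avail, h x hx hxy]) with heq | ⟨hp, hq⟩ | ⟨hq, hp⟩
  · exact ⟨y, fun x hx hxy => by rw [heq, h x hx hxy], Or.inl rfl⟩
  · have hyS' : y ∈ S' := by simpa [avail, (avail_eq_true.1 (find?_some hp)).1] using hq
    cases hf : L.find? (avail G S' a) with
    | none => exact ⟨y, fun x hx hxy => by simp [hp, Ne.symm hxy, h x hx hxy], Or.inl rfl⟩
    | some d =>
      refine ⟨d, fun x hx hxd => ?_, Or.inr (Or.inr rfl)⟩
      by_cases hxy : x = y
      · subst hxy; simp [hp, hyS']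
      · simp [hp, Ne.symm hxd, Ne.symm hxy, h x hx hxy]
  · have hyS : y ∈ S := by simpa [avail, (avail_eq_true.1 (find?_some hq)).1] using hp
    cases hf : L.find? (avail G S a) with
    | none => exact ⟨y, fun x hx hxy => by simp [hq, Ne.symm hxy, h x hx hxy], Or.inl rfl⟩
    | some d =>
      refine ⟨d, fun x hx hxd => ?_, Or.inr (Or.inl rfl)⟩
      by_cases hxy : x = y
      · subst hxy; simp [hq, hyS]
      · simp [hq, Ne.symm hxd, Ne.symm hxy, h x hx hxy]

theorem exists_agree_nextForbidden {S S' : Finset V} {a y : V} {L : List V} (ha : a ∉ L)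
    (h : ∀ x ∈ a :: L, x ≠ y → (x ∈ S ↔ x ∈ S')) :
    ∃ y', (∀ x ∈ L, x ≠ y' → (x ∈ nextForbidden G S a L ↔ x ∈ nextForbidden G S' a L)) ∧
      (y' = y ∨ pick G S a L = some y' ∨ pick G S' a L = some y') := by
  have hL : ∀ x ∈ L, x ≠ y → (x ∈ S ↔ x ∈ S') := fun x hx => h x (mem_cons_of_mem a hx)
  by_cases hsame : a ∈ S ↔ a ∈ S'
  · by_cases haS : a ∈ S
    · refine ⟨y, fun x hx hxy => ?_, Or.inl rfl⟩
      simp [mem_nextForbidden, pick_of_mem haS, pick_of_mem (hsame.1 haS), hL x hx hxy]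
    · exact exists_agree_nextForbidden_of_notMem haS (mt hsame.2 haS) hL
  -- here `a = y`, and `a ∉ L`, so `S` and `S'` agree on all of `L`
  have hL' : ∀ x ∈ L, x ∈ S ↔ x ∈ S' := fun x hx =>
    hL x hx fun hxy => hsame (h a mem_cons_self fun hay => ha (hay ▸ hxy ▸ hx))
  simp only [mem_nextForbidden]
  cases hp : pick G S a L with
  | some d =>
    have hp' : pick G S' a L = none := pick_of_mem (by have := (pick_spec hp).2.1; tauto)
    exact ⟨d, fun x hx hxd => by simp [hp', hL' x hx, Ne.symm hxd], Or.inr (Or.inl rfl)⟩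
  | none =>
    cases hp' : pick G S' a L with
    | none => exact ⟨y, fun x hx _ => by simp [hL' x hx], Or.inl rfl⟩
    | some d => exact ⟨d, fun x hx hxd => by simp [hL' x hx, Ne.symm hxd], Or.inr (Or.inr rfl)⟩

section BackupBound

variable {β : Type*} [Preorder β] {σ : V → β}

variable (G σ) in
def BackupBound (L : List V) : Prop :=
  ∀ ⦃T T' : Finset V⦄ ⦃y u v b : V⦄, y ≠ u → (∀ x ∈ L, x ≠ y → (x ∈ T ↔ x ∈ T')) →
    Paired (run G T L) u v → Paired (run G (insert v T) L) u b →
      ∃ w, Paired (run G T' L) u w ∧ σ w ≤ σ b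

theorem backupBound_cons_self {u : V} {L : List V} (hL : (u :: L).Pairwise (σ · < σ ·))
    {T T' : Finset V} {y v b : V} (hyu : y ≠ u)
    (hT : ∀ x ∈ u :: L, x ≠ y → (x ∈ T ↔ x ∈ T'))
    (h₁ : Paired (run G T (u :: L)) u v) (h₂ : Paired (run G (insert v T) (u :: L)) u b) :
    ∃ w, Paired (run G T' (u :: L)) u w ∧ σ w ≤ σ b := by
  have huL := notMem_of_pairwise_cons hL
  have hv := pick_eq_some.1 ((paired_run_cons_self huL).1 h₁)
  obtain ⟨hadj, -, hbT, hbL⟩ := pick_spec ((paired_run_cons_self huL).1 h₂)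
  have huT' : u ∉ T' := fun h => hv.1 ((hT u mem_cons_self hyu.symm).2 h)
  have hb : avail G T u b := avail_eq_true.2 ⟨hadj, fun h => hbT (Finset.mem_insert_of_mem h)⟩
  have hbv : b ≠ v := by rintro rfl; exact hbT (Finset.mem_insert_self _ _)
  -- `u` can still take `v`, or `b` when `v` is the vertex that changed
  obtain ⟨z, hzL, hz, hzb⟩ : ∃ z ∈ L, avail G T' u z ∧ σ z ≤ σ b := by
    by_cases hyv : y = v
    · refine ⟨b, hbL, avail_eq_true.2 ⟨hadj, fun h => hbT ?_⟩, le_rfl⟩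
      exact Finset.mem_insert_of_mem ((hT b (mem_cons_of_mem u hbL) (hyv ▸ hbv)).2 h)
    · have hvL := mem_of_find?_eq_some hv.2
      obtain ⟨hadjv, hvT⟩ := avail_eq_true.1 (find?_some hv.2)
      refine ⟨v, hvL, avail_eq_true.2 ⟨hadjv, fun h => hvT ?_⟩,
        find?_le_of_pairwise hL.of_cons hv.2 hbL hb⟩
      exact (hT v (mem_cons_of_mem u hvL) (Ne.symm hyv)).2 h
  obtain ⟨w, hw, hwz⟩ := exists_find?_eq_some_le hL.of_cons hzL hz
  exact ⟨w, (paired_run_cons_self huL).2 (pick_eq_some.2 ⟨huT', hw⟩), hwz.trans hzb⟩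

theorem backupBound_cons_partner {v : V} {L : List V} (hL : (v :: L).Pairwise (σ · < σ ·))
    {T T' : Finset V} {y u b : V} (hyu : y ≠ u)
    (hT : ∀ x ∈ v :: L, x ≠ y → (x ∈ T ↔ x ∈ T'))
    (h₁ : Paired (run G T (v :: L)) u v) (h₂ : Paired (run G (insert v T) (v :: L)) u b) :
    ∃ w, Paired (run G T' (v :: L)) u w ∧ σ w ≤ σ b := by
  have hvL := notMem_of_pairwise_cons hL
  have hu := pick_eq_some.1 ((paired_run_cons_self hvL).1 h₁.symm)
  rw [run_cons_of_mem (Finset.mem_insert_self v T)] at h₂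
  have hvb : σ v < σ b := (pairwise_cons.1 hL).1 b h₂.symm.run_spec.2.2
  have hTL : ∀ x ∈ L, x ≠ y → (x ∈ T ↔ x ∈ T') := fun x hx => hT x (mem_cons_of_mem v hx)
  have hne : ∀ x ∈ L, x ≠ v := fun x hx hxv => hvL (hxv ▸ hx)
  by_cases hvT' : v ∈ T'
  · -- then `v` is the changed vertex, and `T'` agrees with `insert v T` on `L`
    have hyv : y = v := by
      by_contra hyv; exact hu.1 ((hT v mem_cons_self (Ne.symm hyv)).2 hvT')
    refine ⟨b, ?_, le_rfl⟩
    rw [run_cons_of_mem hvT', run_congr (S' := insert v T) fun x hx => ?_]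
    · exact h₂
    · simp [Finset.mem_insert, hne x hx, hTL x hx (hyv ▸ hne x hx)]
  rcases find?_eq_or_of_agree_off (l := L) (p := avail G T v) (q := avail G T' v) (y := y)
    (fun x hx hxy => by simp [avail, hTL x hx hxy]) with heq | ⟨hy, -⟩ | ⟨hy, hyT⟩
  · refine ⟨v, paired_run_cons.2 (Or.inr (Or.inl ⟨pick_eq_some.2 ⟨hvT', heq ▸ hu.2⟩, rfl⟩)),
      hvb.le⟩
  · exact absurd (Option.some.inj (hu.2.symm.trans hy)) (Ne.symm hyu)
  · -- `v` now takes `y`, which was unavailable before, and the runs meet again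
    have hyT : y ∈ T := by simpa [avail, (avail_eq_true.1 (find?_some hy)).1] using hyT
    have hp : pick G T' v L = some y := pick_eq_some.2 ⟨hvT', hy⟩
    refine ⟨b, paired_run_cons.2 (Or.inr (Or.inr ?_)), le_rfl⟩
    rw [run_congr (S' := insert v T) fun x hx => ?_]
    · exact h₂
    · by_cases hxy : x = y
      · subst hxy; simp [mem_nextForbidden, hp, hyT]
      · simp [mem_nextForbidden, hp, Ne.symm hxy, hne x hx, hTL x hx hxy]

theorem backupBound_cons_of_ne {a : V} {L : List V} (hL : (a :: L).Pairwise (σ · < σ ·))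
    (ih : BackupBound G σ L) {T T' : Finset V} {y u v b : V} (hau : a ≠ u) (hav : a ≠ v)
    (hyu : y ≠ u) (hT : ∀ x ∈ a :: L, x ≠ y → (x ∈ T ↔ x ∈ T'))
    (h₁ : Paired (run G T (a :: L)) u v) (h₂ : Paired (run G (insert v T) (a :: L)) u b) :
    ∃ w, Paired (run G T' (a :: L)) u w ∧ σ w ≤ σ b := by
  obtain ⟨h₁', h₂'⟩ := paired_run_nextForbidden hau hav h₁ h₂
  obtain ⟨y', hagree, hy'⟩ := exists_agree_nextForbidden (G := G) (notMem_of_pairwise_cons hL) hT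
  by_cases hy'u : y' = u
  · subst hy'u
    rcases hy' with hy' | hp | hp
    · exact absurd hy'.symm hyu
    · exact absurd (mem_nextForbidden.2 (Or.inr hp)) h₁'.run_spec.2.1
    · exact ⟨a, paired_run_cons.2 (Or.inr (Or.inl ⟨hp, rfl⟩)),
        ((pairwise_cons.1 hL).1 b h₂'.symm.run_spec.2.2).le⟩
  obtain ⟨w, hw, hwb⟩ := ih hy'u hagree h₁' h₂'
  exact ⟨w, paired_run_cons.2 (Or.inr (Or.inr hw)), hwb⟩

theorem backupBound {L : List V} (hL : L.Pairwise (σ · < σ ·)) : BackupBound G σ L := by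
  induction L with
  | nil => intro T T' y u v b _ _ h₁; simp [run, Paired] at h₁
  | cons a L ih =>
    intro T T' y u v b hyu hT h₁ h₂
    by_cases hau : a = u
    · subst hau; exact backupBound_cons_self hL hyu hT h₁ h₂
    by_cases hav : a = v
    · subst hav; exact backupBound_cons_partner hL hyu hT h₁ h₂
    exact backupBound_cons_of_ne (G := G) hL (ih hL.of_cons) hau hav hyu hT h₁ h₂

end BackupBound

theorem isMatchedL_append {M N : List (V × V)} {y : V} :
    isMatchedL (M ++ N) y = (isMatchedL M y || isMatchedL N y) := by
  simp [isMatchedL]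

variable (G) in
def EdgesCovered (order Pre : List V) (M : List (V × V)) : Prop :=
  ∀ y ∈ Pre, ∀ z ∈ order, G.Adj y z → isMatchedL M y = true ∨ isMatchedL M z = true

theorem rankingStepF_eq_pick {order Pre L : List V} {M : List (V × V)} {S : Finset V} {a : V}
    (horder : order = Pre ++ a :: L) (hS : ∀ y ∈ a :: L, isMatchedL M y = true ↔ y ∈ S)
    (hM : EdgesCovered G order Pre M) :
    rankingStepF G [] order M a = ((pick G S a L).map (a, ·)).toList ++ M := by
  by_cases ha : a ∈ S
  · simp [rankingStepF, (hS a mem_cons_self).2 ha, pick_of_mem ha]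
  have ha' : isMatchedL M a = false := by simpa using mt (hS a mem_cons_self).1 ha
  have hPre : ∀ y ∈ Pre, ¬(G.Adj a y && !isMatchedL M y) = true := fun y hy h => by
    simp only [Bool.and_eq_true, Bool.not_eq_true', decide_eq_true_eq] at h
    simpa [h.2, ha'] using hM y hy a (by simp [horder]) h.1.symm
  have hfind : order.find? (fun w => decide (G.Adj a w) && !decide (w ∈ ([] : List V)) &&
      !isMatchedL M w) = L.find? (avail G S a) := by
    rw [horder, find?_append, find?_eq_none.2 (by simpa using hPre), Option.none_or,
      find?_cons_of_neg (by simp)]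
    exact find?_congr fun x hx => by simp [avail, ← hS x (mem_cons_of_mem a hx)]
  rw [rankingStepF, if_neg (by simp [ha']), hfind]
  simp only [pick, ha, if_false]
  cases L.find? (avail G S a) <;> rfl

theorem EdgesCovered.append_pick {order Pre L : List V} {M : List (V × V)} {S : Finset V} {a : V}
    (horder : order = Pre ++ a :: L) (hS : ∀ y ∈ a :: L, isMatchedL M y = true ↔ y ∈ S)
    (hM : EdgesCovered G order Pre M) :
    EdgesCovered G order (Pre ++ [a]) (((pick G S a L).map (a, ·)).toList ++ M) := by
  intro y hy z hz hyz
  rcases mem_append.1 hy with hy | hy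
  · rcases hM y hy z hz hyz with h | h <;> simp [isMatchedL_append, h]
  obtain rfl := mem_singleton.1 hy
  cases hp : pick G S y L with
  | some c => simp [isMatchedL]
  | none =>
    show isMatchedL M y = true ∨ isMatchedL M z = true
    by_cases hyS : y ∈ S
    · exact Or.inl ((hS y mem_cons_self).2 hyS)
    have hnone : L.find? (avail G S y) = none := by simpa [pick, hyS] using hp
    rw [horder] at hz
    rcases mem_append.1 hz with hz | hz
    · exact (hM z hz y (by simp [horder]) hyz.symm).symm
    rcases mem_cons.1 hz with rfl | hz
    · exact absurd hyz G.irrefl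
    · have hzS : z ∈ S := by simpa [avail, hyz] using find?_eq_none.1 hnone z hz
      exact Or.inr ((hS z (mem_cons_of_mem y hz)).2 hzS)

theorem foldl_rankingStepF_eq_run {order : List V} (hnd : order.Nodup) {L Pre : List V}
    {M : List (V × V)} {S : Finset V} (horder : order = Pre ++ L)
    (hS : ∀ y ∈ L, isMatchedL M y = true ↔ y ∈ S) (hM : EdgesCovered G order Pre M) :
    L.foldl (rankingStepF G [] order) M = (run G S L).reverse ++ M := by
  induction L generalizing Pre M S with
  | nil => simp [run]
  | cons a L ih =>
    have haL : a ∉ L := (nodup_cons.1 ((horder ▸ hnd).sublist (sublist_append_right _ _))).1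
    have hS' : ∀ y ∈ L, isMatchedL (((pick G S a L).map (a, ·)).toList ++ M) y = true ↔
        y ∈ nextForbidden G S a L := fun y hy => by
      have hya : a ≠ y := by rintro rfl; exact haL hy
      rw [isMatchedL_append, Bool.or_eq_true, hS y (mem_cons_of_mem a hy), mem_nextForbidden]
      cases pick G S a L <;> simp [isMatchedL, hya, or_comm]
    rw [foldl_cons, rankingStepF_eq_pick horder hS hM,
      ih (by simp [horder]) hS' (hM.append_pick horder hS)]
    simp only [run, reverse_append, append_assoc]
    cases pick G S a L <;> rfl

theorem rankingList_eq_reverse_run {order : List V} (hnd : order.Nodup) :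
    rankingList G order = (run G ∅ order).reverse := by
  rw [rankingList, foldl_rankingStepF_eq_run hnd (Pre := []) (S := ∅) rfl
    (by simp [isMatchedL]) (by simp [EdgesCovered]), append_nil]

theorem matchedTo_iff_paired {order : List V} (hnd : order.Nodup) {u w : V} :
    matchedTo G order u w ↔ Paired (run G ∅ order) u w := by
  simp [matchedTo, Paired, rankingList_eq_reverse_run hnd]

end Ranking

open Ranking in
theorem stmt14_general {V : Type*} [DecidableEq V] (G : SimpleGraph V) [DecidableRel G.Adj]
    (order : List V) (hnd : order.Nodup) (ustar : V) (hu : ustar ∉ order)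
    (u v b : V) (hmatch : matchedTo G order u v)
    (hbackup : matchedTo G (order.erase v) u b)
    (i : ℕ) :
    ∃ w : V, matchedTo G (order.insertIdx i ustar) u w ∧
      (order.insertIdx i ustar).idxOf w ≤ (order.insertIdx i ustar).idxOf b := by
  set L := order.insertIdx i ustar
  have hL : L.Nodup := hnd.insertIdx_of_notMem hu i
  have herase : L.erase ustar = order := erase_insertIdx_of_notMem hu i
  rw [matchedTo_iff_paired hnd] at hmatch
  rw [matchedTo_iff_paired (hnd.erase v)] at hbackup
  have h₁ : Paired (run G {ustar} L) u v := by
    rwa [← Finset.insert_empty, run_insert_eq_run_erase hL, herase]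
  have h₂ : Paired (run G (insert v {ustar}) L) u b := by
    rwa [Finset.pair_comm, run_insert_eq_run_erase hL, herase, ← Finset.insert_empty,
      run_insert_eq_run_erase hnd]
  have hyu : ustar ≠ u := fun h => hu (h ▸ hmatch.run_spec.2.2)
  obtain ⟨w, hw, hwb⟩ := backupBound hL.pairwise_idxOf_lt hyu
    (fun x _ hx => by simp [hx]) h₁ h₂ (T' := ∅)
  exact ⟨w, (matchedTo_iff_paired hL).2 hw, hwb⟩

/-- Backup protection: if Ranking on `σ₋ᵤ*` matches `u` to `v` and `u` has backup `b`
(its match after additionally removing `v`), then for any `σ` obtained by inserting `u*`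
at an arbitrary rank, `u` is matched in `R(σ)` to some `w` with `σ(w) ≤ σ(b)`. -/
theorem stmt14 {V : Type*} [DecidableEq V] (G : SimpleGraph V) [DecidableRel G.Adj]
    (order : List V) (hnd : order.Nodup) (ustar : V) (hu : ustar ∉ order)
    (hall : ∀ x : V, x ≠ ustar → x ∈ order)
    (u v b : V) (hmatch : matchedTo G order u v)
    (hbackup : matchedTo G (order.erase v) u b)
    (i : ℕ) (hi : i ≤ order.length) :
    ∃ w : V, matchedTo G (order.insertIdx i ustar) u w ∧
      (order.insertIdx i ustar).idxOf w ≤ (order.insertIdx i ustar).idxOf b :=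
  stmt14_general G order hnd ustar hu u v b hmatch hbackup i
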